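/- Coercivity of nonnegative nonincreasing kernels (smooth case): let K ∈ C¹([0,T]) with K ≥ 0 and K' ≤ 0 on [0,T]. Then for every y ∈ C¹([0,T]), ∫₀ᵀ (K * y')(t) y(t) dt ≥ −(1/2) ‖K‖_{L¹(0,T)} y(0)², where (K * y')(t) = ∫₀ᵗ K(t-s) y'(s) ds. -/

import Mathlib

open MeasureTheory Set

/-!
Since `K` is nonincreasing, integrating `d/ds [K (t - s) (y t - y s)²]` over `[0, t]` gives
`(K * (y²)')(t) ≤ 2 (K * y')(t) y(t)`. Integrating in `t` and swapping the order of integration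
turns the left side into `∫₀ᵀ I(T - s) (y²)'(s) ds` with `I(u) = ∫₀ᵘ K`, and an integration by
parts bounds this from below by `-I(T) y(0)²`, because `K ≥ 0`. The data are first extended
continuously from `[0, T]` to `ℝ`.
-/

theorem intervalIntegral_intervalIntegral_swap_triangle {E : Type*} [NormedAddCommGroup E]
    [NormedSpace ℝ E] {a b : ℝ} (hab : a ≤ b) {F : ℝ → ℝ → E}
    (hF : ContinuousOn F.uncurry (Icc a b ×ˢ Icc a b)) :
    ∫ t in a..b, ∫ s in a..t, F t s = ∫ s in a..b, ∫ t in s..b, F t s := by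
  set G : ℝ × ℝ → E := {p | p.2 < p.1}.indicator F.uncurry
  have hG : IntegrableOn G (uIoc a b ×ˢ uIoc a b) := by
    refine IntegrableOn.indicator ?_ (measurableSet_lt measurable_snd measurable_fst)
    rw [uIoc_of_le hab]
    exact (hF.integrableOn_compact (isCompact_Icc.prod isCompact_Icc)).mono_set
      (prod_mono Ioc_subset_Icc_self Ioc_subset_Icc_self)
  convert intervalIntegral_intervalIntegral_swap (F := fun t s => G (t, s)) hG using 1
  · refine intervalIntegral.integral_congr fun t ht => ?_
    rw [uIcc_of_le hab] at ht
    have hae : (Iio t).indicator (F t) =ᵐ[volume] (Iic t).indicator (F t) :=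
      indicator_ae_eq_of_ae_eq_set Iio_ae_eq_Iic
    rw [← intervalIntegral.integral_indicator ht]
    exact intervalIntegral.integral_congr_ae (hae.mono fun s h _ => h.symm)
  · refine intervalIntegral.integral_congr fun s hs => ?_
    rw [uIcc_of_le hab] at hs
    show _ = ∫ t in a..b, (Ioi s).indicator (fun t => F t s) t
    rw [intervalIntegral.integral_of_le hab, intervalIntegral.integral_of_le hs.2,
      integral_indicator measurableSet_Ioi, Measure.restrict_restrict measurableSet_Ioi,
      inter_comm, Ioc_inter_Ioi, sup_eq_right.2 hs.1]

/-- `(K * f)(t)` in the paper's notation. -/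
noncomputable def volterraConv (K f : ℝ → ℝ) (t : ℝ) : ℝ :=
  ∫ s in (0 : ℝ)..t, K (t - s) * f s

theorem continuous_volterraConv {K f : ℝ → ℝ} (hK : Continuous K) (hf : Continuous f) :
    Continuous (volterraConv K f) :=
  intervalIntegral.continuous_parametric_intervalIntegral_of_continuous (by fun_prop)
    continuous_id

theorem volterraConv_congr {K K₁ f f₁ : ℝ → ℝ} {T : ℝ} (hK : EqOn K K₁ (Icc 0 T))
    (hf : EqOn f f₁ (Icc 0 T)) : EqOn (volterraConv K f) (volterraConv K₁ f₁) (Icc 0 T) := by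
  intro t ht
  refine intervalIntegral.integral_congr fun s hs => ?_
  rw [uIcc_of_le ht.1] at hs
  simp only [hK ⟨sub_nonneg.2 hs.2, by linarith [hs.1, ht.2]⟩, hf ⟨hs.1, hs.2.trans ht.2⟩]

theorem integral_volterraConv {K f : ℝ → ℝ} {T : ℝ} (hT : 0 ≤ T) (hK : Continuous K)
    (hf : Continuous f) :
    ∫ t in (0 : ℝ)..T, volterraConv K f t
      = ∫ s in (0 : ℝ)..T, (∫ u in (0 : ℝ)..T - s, K u) * f s := by
  unfold volterraConv
  rw [intervalIntegral_intervalIntegral_swap_triangle hT (by fun_prop)]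
  refine intervalIntegral.integral_congr fun s _ => ?_
  rw [intervalIntegral.integral_mul_const, intervalIntegral.integral_comp_sub_right K s, sub_self]

section Pointwise

variable {K K' y y' : ℝ → ℝ} {t : ℝ}

/-- Integrate `d/ds [K (t - s) (y t - y s)²]` over `[0, t]` and drop its nonnegative `K'`-term. -/
theorem integral_kernel_mul_sub_mul_deriv_nonneg (ht : 0 ≤ t) (hK : Continuous K)
    (hKd : ∀ u ∈ Ioo 0 t, HasDerivAt K (K' u) u) (hK' : ∀ u ∈ Ioo 0 t, K' u ≤ 0)
    (hKt : 0 ≤ K t) (hy : Continuous y) (hyd : ∀ s ∈ Ioo 0 t, HasDerivAt y (y' s) s)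
    (hy' : Continuous y') :
    0 ≤ ∫ s in (0 : ℝ)..t, K (t - s) * (2 * (y t - y s) * y' s) := by
  have hderiv : ∀ s ∈ Ioo 0 t, HasDerivWithinAt (fun s => K (t - s) * (y t - y s) ^ 2)
      (-K' (t - s) * (y t - y s) ^ 2 + -(K (t - s) * (2 * (y t - y s) * y' s))) (Ioi s) s := by
    intro s hs
    have hK_s : HasDerivAt (fun s => K (t - s)) (-K' (t - s)) s :=
      (hKd (t - s) ⟨by linarith [hs.2], by linarith [hs.1]⟩).comp_const_sub t s
    refine ((hK_s.fun_mul (((hyd s hs).const_sub (y t)).fun_pow 2)).congr_deriv ?_)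
      |>.hasDerivWithinAt
    push_cast
    ring
  have key := intervalIntegral.integral_le_sub_of_hasDeriv_right_of_le ht (by fun_prop) hderiv
    (Continuous.integrableOn_Icc (by fun_prop))
    (fun s hs => le_add_of_nonneg_left (mul_nonneg (neg_nonneg.2 (hK' _
      ⟨by linarith [hs.2], by linarith [hs.1]⟩)) (sq_nonneg _)))
  rw [intervalIntegral.integral_neg] at key
  simp only [sub_self, sub_zero] at key
  nlinarith [mul_nonneg hKt (sq_nonneg (y t - y 0))]

theorem volterraConv_deriv_sq_le (ht : 0 ≤ t) (hK : Continuous K)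
    (hKd : ∀ u ∈ Ioo 0 t, HasDerivAt K (K' u) u) (hK' : ∀ u ∈ Ioo 0 t, K' u ≤ 0)
    (hKt : 0 ≤ K t) (hy : Continuous y) (hyd : ∀ s ∈ Ioo 0 t, HasDerivAt y (y' s) s)
    (hy' : Continuous y') :
    volterraConv K (fun s => 2 * y s * y' s) t ≤ 2 * (volterraConv K y' t * y t) := by
  have hdiff : 2 * (volterraConv K y' t * y t) - volterraConv K (fun s => 2 * y s * y' s) t
      = ∫ s in (0 : ℝ)..t, K (t - s) * (2 * (y t - y s) * y' s) := by
    rw [volterraConv, volterraConv, ← intervalIntegral.integral_mul_const,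
      ← intervalIntegral.integral_const_mul, ← intervalIntegral.integral_sub
        (Continuous.intervalIntegrable (by fun_prop) _ _)
        (Continuous.intervalIntegrable (by fun_prop) _ _)]
    congr 1 with s
    ring
  linarith [integral_kernel_mul_sub_mul_deriv_nonneg ht hK hKd hK' hKt hy hyd hy']

end Pointwise

/-- Integrate `d/ds [(∫₀^{T-s} K) z s]` over `[0, T]` and drop its nonpositive `K`-term. -/
theorem neg_integral_mul_le_integral_primitive_mul_deriv {K z z' : ℝ → ℝ} {T : ℝ} (hT : 0 ≤ T)
    (hK : Continuous K) (hK0 : ∀ u ∈ Ioo 0 T, 0 ≤ K u) (hz : Continuous z)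
    (hz0 : ∀ s ∈ Ioo 0 T, 0 ≤ z s) (hzd : ∀ s ∈ Ioo 0 T, HasDerivAt z (z' s) s)
    (hz' : Continuous z') :
    -(∫ u in (0 : ℝ)..T, K u) * z 0
      ≤ ∫ s in (0 : ℝ)..T, (∫ u in (0 : ℝ)..T - s, K u) * z' s := by
  have hderiv : ∀ s ∈ Ioo 0 T, HasDerivWithinAt (fun s => (∫ u in (0 : ℝ)..T - s, K u) * z s)
      (-K (T - s) * z s + (∫ u in (0 : ℝ)..T - s, K u) * z' s) (Ioi s) s := fun s hs =>
    ((((hK.integral_hasStrictDerivAt 0 (T - s)).hasDerivAt).comp_const_sub T s).mul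
      (hzd s hs)).hasDerivWithinAt
  have hφ : Continuous fun s => (∫ u in (0 : ℝ)..T - s, K u) * z' s := by fun_prop
  have key := intervalIntegral.sub_le_integral_of_hasDeriv_right_of_le hT (by fun_prop) hderiv
    (φ := fun s => (∫ u in (0 : ℝ)..T - s, K u) * z' s) hφ.integrableOn_Icc
    (fun s hs => by
      nlinarith [mul_nonneg (hK0 (T - s) ⟨by linarith [hs.2], by linarith [hs.1]⟩) (hz0 s hs)])
  simpa using key

theorem neg_half_integral_mul_sq_le_integral_volterraConv_mul {K K' y y' : ℝ → ℝ} {T : ℝ}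
    (hT : 0 ≤ T) (hK : Continuous K) (hKd : ∀ u ∈ Ioo 0 T, HasDerivAt K (K' u) u)
    (hK0 : ∀ u ∈ Icc 0 T, 0 ≤ K u) (hK' : ∀ u ∈ Ioo 0 T, K' u ≤ 0) (hy : Continuous y)
    (hyd : ∀ s ∈ Ioo 0 T, HasDerivAt y (y' s) s) (hy' : Continuous y') :
    -(1 / 2) * (∫ u in (0 : ℝ)..T, K u) * y 0 ^ 2
      ≤ ∫ t in (0 : ℝ)..T, volterraConv K y' t * y t := by
  set z' : ℝ → ℝ := fun s => 2 * y s * y' s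
  have hz' : Continuous z' := by fun_prop
  have hpointwise : ∀ t ∈ Icc 0 T, 1 / 2 * volterraConv K z' t ≤ volterraConv K y' t * y t :=
    fun t ht => by
      have := volterraConv_deriv_sq_le ht.1 hK (fun u hu => hKd u ⟨hu.1, hu.2.trans_le ht.2⟩)
        (fun u hu => hK' u ⟨hu.1, hu.2.trans_le ht.2⟩) (hK0 t ht) hy
        (fun s hs => hyd s ⟨hs.1, hs.2.trans_le ht.2⟩) hy'
      linarith
  have hparts := neg_integral_mul_le_integral_primitive_mul_deriv (z := fun s => y s ^ 2) hT hK
    (fun u hu => hK0 u (Ioo_subset_Icc_self hu)) (hy.pow 2) (fun s _ => sq_nonneg (y s))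
    (fun s hs => ((hyd s hs).fun_pow 2).congr_deriv (by simp [z'])) hz'
  calc -(1 / 2) * (∫ u in (0 : ℝ)..T, K u) * y 0 ^ 2
      ≤ 1 / 2 * ∫ s in (0 : ℝ)..T, (∫ u in (0 : ℝ)..T - s, K u) * z' s := by linarith
    _ = ∫ t in (0 : ℝ)..T, 1 / 2 * volterraConv K z' t := by
      rw [intervalIntegral.integral_const_mul, integral_volterraConv hT hK hz']
    _ ≤ ∫ t in (0 : ℝ)..T, volterraConv K y' t * y t :=
      intervalIntegral.integral_mono_on hT
        (((continuous_volterraConv hK hz').const_mul _).intervalIntegrable _ _)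
        (((continuous_volterraConv hK hy').mul hy).intervalIntegrable _ _) hpointwise

theorem ContinuousOn.exists_continuous_eqOn_Icc {α β : Type*} [LinearOrder α]
    [TopologicalSpace α] [OrderTopology α] [TopologicalSpace β] {f : α → β} {a b : α}
    (hab : a ≤ b) (hf : ContinuousOn f (Icc a b)) :
    ∃ g : α → β, Continuous g ∧ EqOn g f (Icc a b) :=
  ⟨IccExtend hab ((Icc a b).domRestrict f), hf.domRestrict.Icc_extend',
    fun _ hx => IccExtend_of_mem hab _ hx⟩

theorem HasDerivWithinAt.hasDerivAt_of_eqOn {f g : ℝ → ℝ} {f' x : ℝ} {s : Set ℝ}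
    (hf : HasDerivWithinAt f f' s x) (hs : s ∈ nhds x) (hg : EqOn g f s) : HasDerivAt g f' x :=
  (hf.hasDerivAt hs).congr_of_eventuallyEq (Filter.mem_of_superset hs hg)

theorem monotone_kernel_coercivity_general (T : ℝ) (hT : 0 < T) (K K' y y' : ℝ → ℝ)
    (hKdiff : ∀ t ∈ Set.Icc (0:ℝ) T, HasDerivWithinAt K (K' t) (Set.Icc 0 T) t)
    (hKnonneg : ∀ t ∈ Set.Icc (0:ℝ) T, 0 ≤ K t)
    (hK'nonpos : ∀ t ∈ Set.Icc (0:ℝ) T, K' t ≤ 0)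
    (hydiff : ∀ t ∈ Set.Icc (0:ℝ) T, HasDerivWithinAt y (y' t) (Set.Icc 0 T) t)
    (hy'cont : ContinuousOn y' (Set.Icc 0 T)) :
    (∫ t in (0:ℝ)..T, (∫ s in (0:ℝ)..t, K (t - s) * y' s) * y t)
      ≥ -(1/2) * (∫ t in Set.Ioc (0:ℝ) T, |K t|) * (y 0) ^ 2 := by
  obtain ⟨K₁, hK₁, hK₁K⟩ := ContinuousOn.exists_continuous_eqOn_Icc hT.le
    fun t ht => (hKdiff t ht).continuousWithinAt
  obtain ⟨y₁, hy₁, hy₁y⟩ := ContinuousOn.exists_continuous_eqOn_Icc hT.le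
    fun t ht => (hydiff t ht).continuousWithinAt
  obtain ⟨y₁', hy₁', hy₁'y'⟩ := ContinuousOn.exists_continuous_eqOn_Icc hT.le hy'cont
  have hcore := neg_half_integral_mul_sq_le_integral_volterraConv_mul hT.le hK₁
    (fun u hu => (hKdiff u (Ioo_subset_Icc_self hu)).hasDerivAt_of_eqOn
      (Icc_mem_nhds hu.1 hu.2) hK₁K)
    (fun u hu => hK₁K hu ▸ hKnonneg u hu) (fun u hu => hK'nonpos u (Ioo_subset_Icc_self hu))
    hy₁ (fun s hs => hy₁'y' (Ioo_subset_Icc_self hs) ▸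
      (hydiff s (Ioo_subset_Icc_self hs)).hasDerivAt_of_eqOn (Icc_mem_nhds hs.1 hs.2) hy₁y)
    hy₁'
  have hlhs : ∫ t in (0 : ℝ)..T, volterraConv K₁ y₁' t * y₁ t
      = ∫ t in (0 : ℝ)..T, volterraConv K y' t * y t :=
    intervalIntegral.integral_congr fun t ht => by
      rw [uIcc_of_le hT.le] at ht
      rw [volterraConv_congr hK₁K hy₁'y' ht, hy₁y ht]
  have hrhs : ∫ u in (0 : ℝ)..T, K₁ u = ∫ t in Ioc (0 : ℝ) T, |K t| := by
    rw [intervalIntegral.integral_of_le hT.le]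
    refine setIntegral_congr_fun measurableSet_Ioc fun u hu => ?_
    rw [hK₁K (Ioc_subset_Icc_self hu), abs_of_nonneg (hKnonneg u (Ioc_subset_Icc_self hu))]
  rwa [hlhs, hrhs, hy₁y (left_mem_Icc.2 hT.le)] at hcore

/-- Coercivity of nonnegative nonincreasing kernels (smooth case): if
`K ∈ C¹([0,T])` with `K ≥ 0` and `K' ≤ 0` on `[0,T]`, then for every
`y ∈ C¹([0,T])`,
`∫₀ᵀ (K * y')(t) y(t) dt ≥ −(1/2) ‖K‖_{L¹(0,T)} y(0)²`. -/
theorem monotone_kernel_coercivity (T : ℝ) (hT : 0 < T) (K K' y y' : ℝ → ℝ)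
    (hKdiff : ∀ t ∈ Set.Icc (0:ℝ) T, HasDerivWithinAt K (K' t) (Set.Icc 0 T) t)
    (hK'cont : ContinuousOn K' (Set.Icc 0 T))
    (hKnonneg : ∀ t ∈ Set.Icc (0:ℝ) T, 0 ≤ K t)
    (hK'nonpos : ∀ t ∈ Set.Icc (0:ℝ) T, K' t ≤ 0)
    (hydiff : ∀ t ∈ Set.Icc (0:ℝ) T, HasDerivWithinAt y (y' t) (Set.Icc 0 T) t)
    (hy'cont : ContinuousOn y' (Set.Icc 0 T)) :
    (∫ t in (0:ℝ)..T, (∫ s in (0:ℝ)..t, K (t - s) * y' s) * y t)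
      ≥ -(1/2) * (∫ t in Set.Ioc (0:ℝ) T, |K t|) * (y 0) ^ 2 :=
  monotone_kernel_coercivity_general T hT K K' y y' hKdiff hKnonneg hK'nonpos hydiff hy'cont
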